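/- arXiv:2407.04456 — 3 statements merged into one kernel-verified Lean document; each statement's English description precedes it below -/
import Mathlib

section
/- For nonnegative functions f₁, f₂ on ℝ^d and exponents 1 < p < ∞ with 1/p + 1/p' = 1, the Choquet integral with respect to the Hausdorff content H^β_∞ satisfies the Hölder-type inequality ∫_Ω f₁ f₂ dH^β_∞ ≤ 2 (∫_Ωف f₁^p dH^β_∞)^{1/p} (∫_Ω f₂^{p'} dH^β_∞)^{1/p'}. -/
open MeasureTheory Set
open scoped ENNReal NNReal

noncomputable section

/-- `ℝ^d` with the Euclidean metric. -/
abbrev Rd (d : ℕ) := EuclideanSpace ℝ (Fin d)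

/-- Coerce a plain function to a point of `ℝ^d`. -/
def toRd (d : ℕ) (a : Fin d → ℝ) : Rd d := WithLp.toLp 2 a

/-- The normalization constant `ω_β = π^{β/2}/Γ(β/2+1)`. -/
def omegaConst (β : ℝ) : ℝ := Real.pi ^ (β / 2) / Real.Gamma (β / 2 + 1)

/-- The Hausdorff content `H^β_∞` in `ℝ^d`, via countable covers by balls. -/
def hContent (d : ℕ) (β : ℝ) (E : Set (Rd d)) : ℝ≥0∞ :=
  ⨅ (c : ℕ → Rd d × ℝ) (_ : E ⊆ ⋃ i, Metric.ball (c i).1 (c i).2),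
    ∑' i, ENNReal.ofReal (omegaConst β * (c i).2 ^ β)

/-- The Choquet integral of a real-valued (nonnegative) function `g` over `Ω`
with respect to a set function `H`. -/
def choquet (d : ℕ) (H : Set (Rd d) → ℝ≥0∞) (Ω : Set (Rd d)) (g : Rd d → ℝ) : ℝ≥0∞ :=
  ∫⁻ t in Set.Ioi (0 : ℝ), H {x | x ∈ Ω ∧ t < g x}

/-- The Choquet integral of an `ℝ≥0∞`-valued function `g` over `Ω`
with respect to a set function `H`. -/
def choquetE (d : ℕ) (H : Set (Rd d) → ℝ≥0∞) (Ω : Set (Rd d)) (g : Rd d → ℝ≥0∞) : ℝ≥0∞ :=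
  ∫⁻ t in Set.Ioi (0 : ℝ), H {x | x ∈ Ω ∧ ENNReal.ofReal t < g x}

/-- Closed axis-parallel cube with corner `a` and side length `l`. -/
def cubeSet (d : ℕ) (a : Fin d → ℝ) (l : ℝ) : Set (Rd d) :=
  {y | ∀ i, a i ≤ y i ∧ y i ≤ a i + l}

/-- Open axis-parallel cube with corner `a` and side length `l`. -/
def cubeO (d : ℕ) (a : Fin d → ℝ) (l : ℝ) : Set (Rd d) :=
  {y | ∀ i, a i < y i ∧ y i < a i + l}

/-- Side length of a dyadic cube of generation `k` in the lattice with unit size `l₀`. -/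
def dSide (l₀ : ℝ) (k : ℤ) : ℝ := l₀ * 2 ^ k

/-- The dyadic cube, indexed by generation `k : ℤ` and position `m : Fin d → ℤ`,
of the dyadic lattice `D(Q₀)` generated by the cube `Q₀` with corner `a₀` and
side length `l₀`. -/
def dSet (d : ℕ) (a₀ : Fin d → ℝ) (l₀ : ℝ) (Q : ℤ × (Fin d → ℤ)) : Set (Rd d) :=
  {y | ∀ i, a₀ i + dSide l₀ Q.1 * (Q.2 i : ℝ) ≤ y i ∧
        y i < a₀ i + dSide l₀ Q.1 * ((Q.2 i : ℝ) + 1)}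

/-- The dyadic Hausdorff content `H^{β,Q₀}_∞`, via countable covers by dyadic cubes. -/
def dContent (d : ℕ) (β : ℝ) (a₀ : Fin d → ℝ) (l₀ : ℝ) (E : Set (Rd d)) : ℝ≥0∞ :=
  ⨅ (c : ℕ → ℤ × (Fin d → ℤ)) (_ : E ⊆ ⋃ i, dSet d a₀ l₀ (c i)),
    ∑' i, ENNReal.ofReal (dSide l₀ (c i).1 ^ β)

/-- The dyadic maximal function associated with `H^{β,Q₀}_∞`. -/
def dMax (d : ℕ) (β : ℝ) (a₀ : Fin d → ℝ) (l₀ : ℝ) (f : Rd d → ℝ) (x : Rd d) : ℝ≥0∞ :=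
  ⨆ (Q : ℤ × (Fin d → ℤ)) (_ : x ∈ dSet d a₀ l₀ Q),
    choquet d (dContent d β a₀ l₀) (dSet d a₀ l₀ Q) (fun y => |f y|)
      / ENNReal.ofReal (dSide l₀ Q.1 ^ β)

/-- The dyadic `β`-dimensional sharp maximal function `M^{#}_{β,Q₀}`. -/
def dSharp (d : ℕ) (β : ℝ) (a₀ : Fin d → ℝ) (l₀ : ℝ) (f : Rd d → ℝ) (x : Rd d) : ℝ≥0∞ :=
  ⨆ (Q : ℤ × (Fin d → ℤ)) (_ : x ∈ dSet d a₀ l₀ Q),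
    ⨅ (c : ℝ),
      choquet d (dContent d β a₀ l₀) (dSet d a₀ l₀ Q) (fun y => |f y - c|)
        / ENNReal.ofReal (dSide l₀ Q.1 ^ β)

/-- The `β`-dimensional sharp maximal function `M^{#}_β`, over all axis-parallel cubes. -/
def sharpMax (d : ℕ) (β : ℝ) (f : Rd d → ℝ) (x : Rd d) : ℝ≥0∞ :=
  ⨆ (a : Fin d → ℝ) (l : ℝ) (_ : 0 < l) (_ : x ∈ cubeSet d a l),
    ⨅ (c : ℝ),
      choquet d (hContent d β) (cubeSet d a l) (fun y => |f y - c|) / ENNReal.ofReal (l ^ β)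

/-- The `β`-dimensional maximal operator `M_{H^β_∞}` over balls. -/
def ballMax (d : ℕ) (β : ℝ) (f : Rd d → ℝ) (x : Rd d) : ℝ≥0∞ :=
  ⨆ (r : ℝ) (_ : 0 < r),
    choquet d (hContent d β) (Metric.ball x r) (fun y => |f y|)
      / hContent d β (Metric.ball x r)

/-- The Riesz normalization constant `γ(α)`. -/
def rieszConst (d : ℕ) (α : ℝ) : ℝ :=
  Real.pi ^ ((d : ℝ) / 2) * 2 ^ α * Real.Gamma (α / 2) / Real.Gamma (((d : ℝ) - α) / 2)

/-- The Riesz potential `I_α μ` of a measure. -/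
def rieszM (d : ℕ) (α : ℝ) (μ : Measure (Rd d)) (x : Rd d) : ℝ≥0∞ :=
  (ENNReal.ofReal (rieszConst d α))⁻¹ * ∫⁻ y, ENNReal.ofReal (dist x y ^ (α - (d : ℝ))) ∂μ

/-- The (real-valued) Riesz potential `I_α f` of a function. -/
def rieszR (d : ℕ) (α : ℝ) (f : Rd d → ℝ) (x : Rd d) : ℝ :=
  (rieszConst d α)⁻¹ * ∫ y, f y * dist x y ^ (α - (d : ℝ))

/-- The fractional maximal function `M_α μ` of a measure. -/
def fracMaxM (d : ℕ) (α : ℝ) (μ : Measure (Rd d)) (x : Rd d) : ℝ≥0∞ :=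
  ⨆ (a : Fin d → ℝ) (l : ℝ) (_ : 0 < l) (_ : x ∈ cubeSet d a l),
    μ (cubeSet d a l) * ENNReal.ofReal (l ^ (α - (d : ℝ)))

/-- The fractional maximal function `M_α f` of a function. -/
def fracMaxF (d : ℕ) (α : ℝ) (f : Rd d → ℝ) (x : Rd d) : ℝ≥0∞ :=
  ⨆ (a : Fin d → ℝ) (l : ℝ) (_ : 0 < l) (_ : x ∈ cubeSet d a l),
    (∫⁻ y in cubeSet d a l, ENNReal.ofReal |f y|) * ENNReal.ofReal (l ^ (α - (d : ℝ)))

/-- The weak `L^{p,∞}(H^β_∞)` quasinorm. -/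
def weakNorm (d : ℕ) (β : ℝ) (p : ℝ) (g : Rd d → ℝ≥0∞) : ℝ≥0∞ :=
  ⨆ (t : ℝ) (_ : 0 < t),
    ENNReal.ofReal t * hContent d β {x | ENNReal.ofReal t < g x} ^ (1 / p)

/-- The local Morrey norm `‖μ‖_{M^β(Ω)}`. -/
def morreyNorm (d : ℕ) (β : ℝ) (μ : Measure (Rd d)) (Ω : Set (Rd d)) : ℝ≥0∞ :=
  ⨆ (x : Rd d) (_ : x ∈ Ω) (r : ℝ) (_ : 0 < r),
    μ (Metric.ball x r ∩ Ω) / ENNReal.ofReal (r ^ β)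

/-- Generation-`k` cell at position `m` of a dyadic grid with generation offsets `o`. -/
def gcell (d : ℕ) (o : ℤ → Fin d → ℝ) (k : ℤ) (m : Fin d → ℤ) : Set (Rd d) :=
  {y | ∀ i, o k i + 2 ^ k * (m i : ℝ) ≤ y i ∧ y i < o k i + 2 ^ k * ((m i : ℝ) + 1)}

/-- A dyadic grid in `ℝ^d`: each generation `k` consists of half-open cubes of side `2^k`
partitioning `ℝ^d`, and consecutive generations are nested. -/
structure DyadicGrid (d : ℕ) where
  o : ℤ → Fin d → ℝ
  nested : ∀ k m, ∃ m', gcell d o k m ⊆ gcell d o (k + 1) m'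

/-- The dyadic Riesz potential `I^D_α μ` with respect to a dyadic grid. -/
def dyadicRiesz (d : ℕ) (G : DyadicGrid d) (α : ℝ) (μ : Measure (Rd d)) (x : Rd d) : ℝ≥0∞ :=
  ∑' p : ℤ × (Fin d → ℤ),
    Set.indicator (gcell d G.o p.1 p.2)
      (fun _ => μ (gcell d G.o p.1 p.2) * ENNReal.ofReal (((2 : ℝ) ^ p.1) ^ (α - (d : ℝ)))) x

/-- The exponential on `ℝ≥0∞`. -/
def expE (t : ℝ≥0∞) : ℝ≥0∞ := if t = ∞ then ∞ else ENNReal.ofReal (Real.exp t.toReal)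

/-!
With `X = ∫ f₁ ^ p`, `Y = ∫ f₂ ^ p'` and `K = X ^ (1/p) * Y ^ (1/p')`, Young's inequality applied
to `f₁ / X ^ (1/p)` and `f₂ / Y ^ (1/p')` gives `f₁ f₂ ≤ K (f₁ ^ p / (p X) + f₂ ^ p' / (p' Y))`
pointwise. The Choquet integral is monotone and positively homogeneous, and because `H^β_∞` is an
outer measure it is quasi-subadditive: `{g₁ + g₂ > t} ⊆ {2 g₁ > t} ∪ {2 g₂ > t}`, which is where the
factor `2` comes from. Integrating yields `2 K (1/p + 1/p') = 2 K`. When `X = 0`, countable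
subadditivity makes `{f₁ > 0}` null, and then the left side vanishes.
-/

namespace ChoquetHolder

variable {d : ℕ}

section HausdorffContent

variable {β : ℝ}

lemma hContent_mono {E F : Set (Rd d)} (h : E ⊆ F) : hContent d β E ≤ hContent d β F :=
  le_iInf₂ fun c hc => iInf₂_le c (h.trans hc)

lemma hContent_empty (hβ : 0 < β) : hContent d β (∅ : Set (Rd d)) = 0 := by
  refine le_antisymm ?_ zero_le
  calc hContent d β ∅ ≤ ∑' _ : ℕ, ENNReal.ofReal (omegaConst β * (0 : ℝ) ^ β) :=
        iInf₂_le (fun _ => ((0 : Rd d), (0 : ℝ))) (empty_subset _)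
    _ = 0 := by simp [Real.zero_rpow hβ.ne']

lemma exists_ballCover_of_hContent_lt {E : Set (Rd d)} {a : ℝ≥0∞} (h : hContent d β E < a) :
    ∃ c : ℕ → Rd d × ℝ, E ⊆ ⋃ i, Metric.ball (c i).1 (c i).2 ∧
      ∑' i, ENNReal.ofReal (omegaConst β * (c i).2 ^ β) < a := by
  simpa only [hContent, iInf_lt_iff, exists_prop] using h

lemma hContent_iUnion_le (E : ℕ → Set (Rd d)) :
    hContent d β (⋃ n, E n) ≤ ∑' n, hContent d β (E n) := by
  refine ENNReal.le_of_forall_pos_le_add fun ε hε hfin => ?_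
  obtain ⟨δ, hδ, hδε⟩ := ENNReal.exists_pos_sum_of_countable (ENNReal.coe_ne_zero.2 hε.ne') ℕ
  have hcover : ∀ n, ∃ c : ℕ → Rd d × ℝ, E n ⊆ ⋃ i, Metric.ball (c i).1 (c i).2 ∧
      ∑' i, ENNReal.ofReal (omegaConst β * (c i).2 ^ β) < hContent d β (E n) + δ n :=
    fun n => exists_ballCover_of_hContent_lt <| ENNReal.lt_add_right
      (ne_top_of_le_ne_top hfin.ne (ENNReal.le_tsum n)) (ENNReal.coe_ne_zero.2 (hδ n).ne')
  choose c hcov hcost using hcover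
  set e : ℕ ≃ ℕ × ℕ := Nat.pairEquiv.symm
  have hcov_union : ⋃ n, E n ⊆ ⋃ k, Metric.ball (c (e k).1 (e k).2).1 (c (e k).1 (e k).2).2 := by
    intro x hx
    obtain ⟨n, hn⟩ := mem_iUnion.1 hx
    obtain ⟨i, hi⟩ := mem_iUnion.1 (hcov n hn)
    exact mem_iUnion.2 ⟨e.symm (n, i), by simpa using hi⟩
  calc hContent d β (⋃ n, E n)
      ≤ ∑' k, ENNReal.ofReal (omegaConst β * (c (e k).1 (e k).2).2 ^ β) :=
        iInf₂_le (fun k => c (e k).1 (e k).2) hcov_union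
    _ = ∑' n, ∑' i, ENNReal.ofReal (omegaConst β * (c n i).2 ^ β) :=
        (e.tsum_eq fun ni => ENNReal.ofReal (omegaConst β * (c ni.1 ni.2).2 ^ β)).trans
          (ENNReal.tsum_prod (f := fun n i => ENNReal.ofReal (omegaConst β * (c n i).2 ^ β)))
    _ ≤ ∑' n, (hContent d β (E n) + δ n) := ENNReal.tsum_le_tsum fun n => (hcost n).le
    _ ≤ ∑' n, hContent d β (E n) + ε := by
        rw [ENNReal.tsum_add]
        exact add_le_add_right hδε.le _

def hContentOuterMeasure (hβ : 0 < β) : OuterMeasure (Rd d) where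
  measureOf := hContent d β
  empty := hContent_empty hβ
  mono := hContent_mono
  iUnion_nat E _ := hContent_iUnion_le E

end HausdorffContent

lemma setLIntegral_Ioi_comp_inv_mul {F : ℝ → ℝ≥0∞} (hF : Measurable F) {c : ℝ} (hc : 0 < c) :
    ∫⁻ t in Ioi 0, F (c⁻¹ * t) = ENNReal.ofReal c * ∫⁻ s in Ioi 0, F s := by
  have hpre : (c⁻¹ * ·) ⁻¹' Ioi (0 : ℝ) = Ioi 0 := by
    ext t
    simp [mul_pos_iff_of_pos_left (inv_pos.2 hc)]
  rw [← hpre, ← setLIntegral_map measurableSet_Ioi hF (measurable_const_mul _),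
    Real.map_volume_mul_left (inv_ne_zero hc.ne'), inv_inv, abs_of_pos hc,
    Measure.restrict_smul, lintegral_smul_measure, hpre, smul_eq_mul]

/-- Young's inequality for `a / x ^ (1 / p)` and `b / y ^ (1 / q)`. -/
lemma young_inequality_rescaled {a b x y p q : ℝ} (ha : 0 ≤ a) (hb : 0 ≤ b) (hx : 0 < x)
    (hy : 0 < y) (hpq : p.HolderConjugate q) :
    a * b ≤ x ^ (1 / p) * y ^ (1 / q) / (p * x) * a ^ p +
      x ^ (1 / p) * y ^ (1 / q) / (q * y) * b ^ q := by
  have hA : 0 < x ^ (1 / p) := Real.rpow_pos_of_pos hx _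
  have hB : 0 < y ^ (1 / q) := Real.rpow_pos_of_pos hy _
  have hAp : (x ^ (1 / p)) ^ p = x := by rw [one_div, Real.rpow_inv_rpow hx.le hpq.ne_zero]
  have hBq : (y ^ (1 / q)) ^ q = y := by rw [one_div, Real.rpow_inv_rpow hy.le hpq.symm.ne_zero]
  have hyoung := Real.young_inequality_of_nonneg (div_nonneg ha hA.le) (div_nonneg hb hB.le) hpq
  rw [Real.div_rpow ha hA.le, Real.div_rpow hb hB.le, hAp, hBq] at hyoung
  have hpos := mul_pos hA hB
  calc a * b = x ^ (1 / p) * y ^ (1 / q) * (a / x ^ (1 / p) * (b / y ^ (1 / q))) := by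
        field_simp
    _ ≤ x ^ (1 / p) * y ^ (1 / q) * (a ^ p / x / p + b ^ q / y / q) :=
        mul_le_mul_of_nonneg_left hyoung hpos.le
    _ = _ := by ring

section Choquet

variable (μ : OuterMeasure (Rd d)) (Ω : Set (Rd d))

lemma antitone_levelSet (g : Rd d → ℝ) : Antitone fun t => μ {x | x ∈ Ω ∧ t < g x} :=
  fun _ _ hst => measure_mono fun _ hx => ⟨hx.1, hst.trans_lt hx.2⟩

variable {μ Ω}

lemma choquet_mono {g₁ g₂ : Rd d → ℝ} (h : ∀ x ∈ Ω, g₁ x ≤ g₂ x) :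
    choquet d μ Ω g₁ ≤ choquet d μ Ω g₂ :=
  lintegral_mono fun _ => measure_mono fun x hx => ⟨hx.1, hx.2.trans_le (h x hx.1)⟩

lemma choquet_const_mul (g : Rd d → ℝ) {c : ℝ} (hc : 0 < c) :
    choquet d μ Ω (fun x => c * g x) = ENNReal.ofReal c * choquet d μ Ω g := by
  have hlevel : ∀ t : ℝ, {x | x ∈ Ω ∧ t < c * g x} = {x | x ∈ Ω ∧ c⁻¹ * t < g x} := by
    intro t
    ext x
    simp only [mem_ofPred_eq, inv_mul_eq_div, div_lt_iff₀ hc, mul_comm c]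
  simp only [choquet, hlevel]
  exact setLIntegral_Ioi_comp_inv_mul (antitone_levelSet μ Ω g).measurable hc

lemma choquet_add_le (g₁ g₂ : Rd d → ℝ) :
    choquet d μ Ω (fun x => g₁ x + g₂ x) ≤ 2 * (choquet d μ Ω g₁ + choquet d μ Ω g₂) := by
  have hsplit : ∀ t : ℝ, {x | x ∈ Ω ∧ t < g₁ x + g₂ x} ⊆
      {x | x ∈ Ω ∧ t < 2 * g₁ x} ∪ {x | x ∈ Ω ∧ t < 2 * g₂ x} := by
    rintro t x ⟨hx, ht⟩
    by_contra! h
    simp only [mem_union, mem_ofPred_eq, hx, true_and, not_or, not_lt] at h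
    linarith
  calc choquet d μ Ω (fun x => g₁ x + g₂ x)
      ≤ ∫⁻ t in Ioi 0, (μ {x | x ∈ Ω ∧ t < 2 * g₁ x} + μ {x | x ∈ Ω ∧ t < 2 * g₂ x}) :=
        lintegral_mono fun t => (measure_mono (hsplit t)).trans (measure_union_le _ _)
    _ = choquet d μ Ω (fun x => 2 * g₁ x) + choquet d μ Ω (fun x => 2 * g₂ x) :=
        lintegral_add_left (antitone_levelSet μ Ω _).measurable _
    _ = 2 * (choquet d μ Ω g₁ + choquet d μ Ω g₂) := by
        rw [choquet_const_mul _ two_pos, choquet_const_mul _ two_pos, ENNReal.ofReal_ofNat, mul_add]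

lemma ofReal_mul_levelSet_le_choquet (g : Rd d → ℝ) (t : ℝ) :
    ENNReal.ofReal t * μ {x | x ∈ Ω ∧ t < g x} ≤ choquet d μ Ω g :=
  calc ENNReal.ofReal t * μ {x | x ∈ Ω ∧ t < g x}
      = ∫⁻ _ in Ioo 0 t, μ {x | x ∈ Ω ∧ t < g x} := by
        rw [setLIntegral_const, Real.volume_Ioo, sub_zero, mul_comm]
    _ ≤ ∫⁻ s in Ioo 0 t, μ {x | x ∈ Ω ∧ s < g x} :=
        setLIntegral_mono (antitone_levelSet μ Ω g).measurable fun _ hs =>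
          antitone_levelSet μ Ω g hs.2.le
    _ ≤ choquet d μ Ω g := lintegral_mono_set Ioo_subset_Ioi_self

lemma choquet_eq_zero_iff {g : Rd d → ℝ} :
    choquet d μ Ω g = 0 ↔ μ {x | x ∈ Ω ∧ 0 < g x} = 0 := by
  constructor
  · intro h
    have hnull : ∀ n : ℕ, μ {x | x ∈ Ω ∧ 1 / ((n : ℝ) + 1) < g x} = 0 := fun n => by
      have hle := (ofReal_mul_levelSet_le_choquet g (1 / ((n : ℝ) + 1))).trans h.le
      refine (mul_eq_zero.1 (nonpos_iff_eq_zero.1 hle)).resolve_left ?_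
      simpa using Nat.cast_add_one_pos n
    refine measure_mono_null (fun x ⟨hx, hg⟩ => ?_ :
      {x | x ∈ Ω ∧ 0 < g x} ⊆ ⋃ n : ℕ, {x | x ∈ Ω ∧ 1 / ((n : ℝ) + 1) < g x})
      (measure_iUnion_null hnull)
    obtain ⟨n, hn⟩ := exists_nat_one_div_lt hg
    exact mem_iUnion.2 ⟨n, hx, hn⟩
  · intro h
    refine le_antisymm ?_ zero_le
    calc choquet d μ Ω g ≤ ∫⁻ _ in Ioi (0 : ℝ), 0 :=
          setLIntegral_mono measurable_const fun t ht =>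
            (measure_mono_null (fun _ hx => ⟨hx.1, (mem_Ioi.1 ht).trans hx.2⟩ :
              {x | x ∈ Ω ∧ t < g x} ⊆ {x | x ∈ Ω ∧ 0 < g x}) h).le
      _ = 0 := lintegral_zero

lemma choquet_mul_eq_zero_of_choquet_rpow_eq_zero {f g : Rd d → ℝ} (hf : ∀ x, 0 ≤ f x)
    {r : ℝ} (h : choquet d μ Ω (fun x => f x ^ r) = 0) :
    choquet d μ Ω (fun x => f x * g x) = 0 := by
  rw [choquet_eq_zero_iff] at h ⊢
  refine measure_mono_null (fun x ⟨hx, hfg⟩ => ⟨hx, Real.rpow_pos_of_pos ?_ r⟩ :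
    {x | x ∈ Ω ∧ 0 < f x * g x} ⊆ {x | x ∈ Ω ∧ 0 < f x ^ r}) h
  exact (hf x).lt_of_ne fun h0 => by simp [← h0] at hfg

variable {p q : ℝ} (hpq : p.HolderConjugate q) {f g : Rd d → ℝ} (hf : ∀ x, 0 ≤ f x)
  (hg : ∀ x, 0 ≤ g x)
include hpq hf hg

lemma choquet_mul_le_of_eq_ofReal {x y : ℝ} (hx : 0 < x) (hy : 0 < y)
    (hX : choquet d μ Ω (fun z => f z ^ p) = ENNReal.ofReal x)
    (hY : choquet d μ Ω (fun z => g z ^ q) = ENNReal.ofReal y) :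
    choquet d μ Ω (fun z => f z * g z) ≤ 2 * ENNReal.ofReal (x ^ (1 / p) * y ^ (1 / q)) := by
  have hp := hpq.pos
  have hq := hpq.symm.pos
  set K := x ^ (1 / p) * y ^ (1 / q)
  have hK : 0 < K := by positivity
  calc choquet d μ Ω (fun z => f z * g z)
      ≤ choquet d μ Ω (fun z => K / (p * x) * f z ^ p + K / (q * y) * g z ^ q) :=
        choquet_mono fun z _ => young_inequality_rescaled (hf z) (hg z) hx hy hpq
    _ ≤ 2 * (ENNReal.ofReal (K / (p * x)) * ENNReal.ofReal x +
          ENNReal.ofReal (K / (q * y)) * ENNReal.ofReal y) := by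
        grw [choquet_add_le, choquet_const_mul _ (by positivity),
          choquet_const_mul _ (by positivity), hX, hY]
    _ = 2 * ENNReal.ofReal K := by
        rw [← ENNReal.ofReal_mul (by positivity), ← ENNReal.ofReal_mul (by positivity),
          ← ENNReal.ofReal_add (by positivity) (by positivity)]
        have hK_eq : K / (p * x) * x + K / (q * y) * y = K * (p⁻¹ + q⁻¹) := by field_simp
        rw [hK_eq, hpq.inv_add_inv_eq_one, mul_one]

theorem choquet_mul_le :
    choquet d μ Ω (fun x => f x * g x) ≤
      2 * (choquet d μ Ω (fun x => f x ^ p)) ^ (1 / p) *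
        (choquet d μ Ω (fun x => g x ^ q)) ^ (1 / q) := by
  set X := choquet d μ Ω (fun x => f x ^ p)
  set Y := choquet d μ Ω (fun x => g x ^ q)
  have hp : 0 < 1 / p := one_div_pos.2 hpq.pos
  have hq : 0 < 1 / q := one_div_pos.2 hpq.symm.pos
  rcases eq_or_ne X 0 with hX0 | hX0
  · simp [choquet_mul_eq_zero_of_choquet_rpow_eq_zero hf hX0]
  rcases eq_or_ne Y 0 with hY0 | hY0
  · simp_rw [mul_comm (f _)]
    simp [choquet_mul_eq_zero_of_choquet_rpow_eq_zero hg hY0]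
  have hXp : X ^ (1 / p) ≠ 0 := by simp [hX0, hpq.pos.le]
  have hYq : Y ^ (1 / q) ≠ 0 := by simp [hY0, hpq.symm.pos.le]
  rcases eq_or_ne X ⊤ with hXtop | hXtop
  · rw [hXtop, ENNReal.top_rpow_of_pos hp, ENNReal.mul_top two_ne_zero, ENNReal.top_mul hYq]
    exact le_top
  rcases eq_or_ne Y ⊤ with hYtop | hYtop
  · rw [hYtop, ENNReal.top_rpow_of_pos hq, ENNReal.mul_top (mul_ne_zero two_ne_zero hXp)]
    exact le_top
  have hx : 0 < X.toReal := ENNReal.toReal_pos hX0 hXtop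
  have hy : 0 < Y.toReal := ENNReal.toReal_pos hY0 hYtop
  calc choquet d μ Ω (fun z => f z * g z)
      ≤ 2 * ENNReal.ofReal (X.toReal ^ (1 / p) * Y.toReal ^ (1 / q)) :=
        choquet_mul_le_of_eq_ofReal hpq hf hg hx hy (ENNReal.ofReal_toReal hXtop).symm
          (ENNReal.ofReal_toReal hYtop).symm
    _ = 2 * X ^ (1 / p) * Y ^ (1 / q) := by
        rw [ENNReal.ofReal_mul (by positivity), ← ENNReal.ofReal_rpow_of_pos hx,
          ← ENNReal.ofReal_rpow_of_pos hy, ENNReal.ofReal_toReal hXtop,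
          ENNReal.ofReal_toReal hYtop, mul_assoc]

end Choquet

end ChoquetHolder

open ChoquetHolder in
theorem choquet_holder_general (d : ℕ) (β : ℝ) (hβ : 0 < β) (Ω : Set (Rd d))
    (p p' : ℝ) (hp : 1 < p) (hpp' : 1 / p + 1 / p' = 1)
    (f₁ f₂ : Rd d → ℝ) (h₁ : ∀ x, 0 ≤ f₁ x) (h₂ : ∀ x, 0 ≤ f₂ x) :
    choquet d (hContent d β) Ω (fun x => f₁ x * f₂ x) ≤
      2 * (choquet d (hContent d β) Ω (fun x => f₁ x ^ p)) ^ (1 / p) *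
        (choquet d (hContent d β) Ω (fun x => f₂ x ^ p')) ^ (1 / p') :=
  choquet_mul_le (μ := hContentOuterMeasure hβ)
    (Real.holderConjugate_iff.2 ⟨hp, by simpa only [one_div] using hpp'⟩) h₁ h₂

/-- Hölder's inequality for Choquet integrals against Hausdorff content. -/
theorem choquet_holder (d : ℕ) (β : ℝ) (hβ : 0 < β) (hβd : β ≤ d) (Ω : Set (Rd d))
    (p p' : ℝ) (hp : 1 < p) (hpp' : 1 / p + 1 / p' = 1)
    (f₁ f₂ : Rd d → ℝ) (h₁ : ∀ x, 0 ≤ f₁ x) (h₂ : ∀ x, 0 ≤ f₂ x) :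
    choquet d (hContent d β) Ω (fun x => f₁ x * f₂ x) ≤
      2 * (choquet d (hContent d β) Ω (fun x => f₁ x ^ p)) ^ (1 / p) *
        (choquet d (hContent d β) Ω (fun x => f₂ x ^ p')) ^ (1 / p') :=
  choquet_holder_general d β hβ Ω p p' hp hpp' f₁ f₂ h₁ h₂
end
end

section
/- Given a family {Q_j} of non-overlapping dyadic cubes in a dyadic lattice D(Q₀), there is a subfamily {Q_{j_k}} satisfying the packing condition Σ_{Q_{j_k} ⊆ Q} ℓ(Q_{j_k})^β ≤ 2 ℓ(Q)^β for every dyadic cube Q ∈ D(Q₀), and moreover H^{β,Q₀}_∞(∪_j Q_j) ≤ Σ_k ℓ(Q_{j_k})^β ≤ 2 H^{β,Q₀}_∞(∪_j Q_j). -/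
open MeasureTheory Set
open scoped ENNReal NNReal

noncomputable section

/-!
Take for `T` a maximal subfamily of `S` (Zorn) satisfying the packing condition; the condition
survives unions of chains because a sum of nonnegative terms is the supremum of its finite
partial sums.

Lower bound. Call `Q` heavy if the cubes of `T` inside `Q` carry weight at least `ℓ(Q)^β`.
Cubes of `T` are heavy, and by maximality every cube of `S \ T` lies in a heavy cube. Heavy
cubes have bounded size, so the maximal heavy cubes are pairwise disjoint, cover `⋃ S`, and
have total weight at most that of `T`.

Upper bound. Given a dyadic cover `(R_i)` of `⋃ S`, a cube of `T` contained in some `R_i` is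
charged to it, for a total of at most `2 ℓ(R_i)^β` by packing. A cube `P ∈ T` contained in no
`R_i` is covered by the `R_i` inside it, and comparing volumes (`β ≤ d`) shows that these
weigh at least `ℓ(P)^β`. Since the cubes of `S` are disjoint, no `R_i` is charged twice.
-/

open Filter Topology

lemma ENNReal.rpow_le_tsum_rpow_of_rpow_le {ι : Type*} {s : ℝ≥0∞} {t : ι → ℝ≥0∞} {β γ : ℝ}
    (hβ : 0 ≤ β) (hβγ : β ≤ γ) (hs₀ : s ≠ 0) (hs : s ≠ ∞) (ht : ∀ i, t i ≤ s)
    (h : s ^ γ ≤ ∑' i, t i ^ γ) : s ^ β ≤ ∑' i, t i ^ β := by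
  have hγβ : 0 ≤ γ - β := sub_nonneg.2 hβγ
  have hsplit (x : ℝ≥0∞) : x ^ γ = x ^ β * x ^ (γ - β) := by
    rw [← ENNReal.rpow_add_of_nonneg _ _ hβ hγβ, add_sub_cancel]
  rw [← ENNReal.mul_le_mul_iff_left (ENNReal.rpow_pos (pos_iff_ne_zero.2 hs₀) hs).ne'
    (ENNReal.rpow_ne_top_of_nonneg hγβ hs), ← hsplit, ← ENNReal.tsum_mul_right]
  exact h.trans (ENNReal.tsum_le_tsum fun i => (hsplit (t i)).trans_le
    (mul_le_mul_right (ENNReal.rpow_le_rpow (ht i) hγβ) _))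

lemma ENNReal.tsum_sUnion_le_of_isChain {α : Type*} (f : α → ℝ≥0∞) {c : Set (Set α)}
    (hc : IsChain (· ⊆ ·) c) {a : ℝ≥0∞} (h : ∀ s ∈ c, ∑' x : s, f x ≤ a) :
    ∑' x : ↥(⋃₀ c), f x ≤ a := by
  rcases c.eq_empty_or_nonempty with rfl | hne
  · simp
  classical
  rw [tsum_subtype, ENNReal.tsum_eq_iSup_sum]
  refine iSup_le fun F => ?_
  obtain ⟨s, hs, hFs⟩ := hc.directedOn.exists_mem_subset_of_finite_of_subset_sUnion hne
    (F.filter (· ∈ ⋃₀ c)).finite_toSet fun x hx => (Finset.mem_filter.1 hx).2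
  calc ∑ x ∈ F, (⋃₀ c).indicator f x = ∑ x ∈ F.filter (· ∈ ⋃₀ c), s.indicator f x := by
        rw [Finset.sum_indicator_eq_sum_filter]
        exact Finset.sum_congr rfl fun x hx => (Set.indicator_of_mem (hFs hx) f).symm
    _ ≤ ∑' x, s.indicator f x := ENNReal.sum_le_tsum _
    _ = ∑' x : s, f x := (tsum_subtype s f).symm
    _ ≤ a := h s hs

section DyadicCubes

variable {d : ℕ} {a₀ : Fin d → ℝ} {l₀ : ℝ}

lemma dSide_pos (hl₀ : 0 < l₀) (k : ℤ) : 0 < dSide l₀ k :=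
  mul_pos hl₀ (zpow_pos two_pos k)

lemma dSide_le_dSide_iff (hl₀ : 0 < l₀) {k k' : ℤ} : dSide l₀ k ≤ dSide l₀ k' ↔ k ≤ k' := by
  rw [dSide, dSide, mul_le_mul_iff_right₀ hl₀, zpow_le_zpow_iff_right₀ one_lt_two]

lemma mem_dSet_iff (hl₀ : 0 < l₀) {p : ℤ × (Fin d → ℤ)} {y : Rd d} :
    y ∈ dSet d a₀ l₀ p ↔ ∀ i, ⌊(y i - a₀ i) / dSide l₀ p.1⌋ = p.2 i := by
  have hs := dSide_pos hl₀ p.1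
  refine forall_congr' fun i => ?_
  rw [Int.floor_eq_iff, le_div_iff₀ hs, div_lt_iff₀ hs]
  constructor <;> rintro ⟨h₁, h₂⟩ <;> constructor <;> linarith

lemma floor_div_dSide_of_le {k k' : ℤ} (hk : k ≤ k') (t : ℝ) :
    ⌊t / dSide l₀ k'⌋ = ⌊t / dSide l₀ k⌋ / 2 ^ (k' - k).toNat := by
  have hside : dSide l₀ k' = dSide l₀ k * ((2 ^ (k' - k).toNat : ℕ) : ℝ) := by
    rw [dSide, dSide, Nat.cast_pow, Nat.cast_ofNat, ← zpow_natCast,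
      Int.toNat_of_nonneg (sub_nonneg.2 hk), mul_assoc, ← zpow_add₀ two_ne_zero,
      add_sub_cancel]
  rw [hside, ← div_div, Int.floor_div_natCast, Nat.cast_pow, Nat.cast_ofNat]

lemma dSet_subset_of_le (hl₀ : 0 < l₀) {p q : ℤ × (Fin d → ℤ)} (hpq : p.1 ≤ q.1)
    (h : ¬Disjoint (dSet d a₀ l₀ p) (dSet d a₀ l₀ q)) : dSet d a₀ l₀ p ⊆ dSet d a₀ l₀ q := by
  obtain ⟨x, hxp, hxq⟩ := Set.not_disjoint_iff.1 h
  intro y hyp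
  rw [mem_dSet_iff hl₀] at hxp hxq hyp ⊢
  intro i
  rw [← hxq i, floor_div_dSide_of_le hpq, floor_div_dSide_of_le hpq, hxp i, hyp i]

lemma dSet_subset_or_subset (hl₀ : 0 < l₀) {p q : ℤ × (Fin d → ℤ)}
    (h : ¬Disjoint (dSet d a₀ l₀ p) (dSet d a₀ l₀ q)) :
    dSet d a₀ l₀ p ⊆ dSet d a₀ l₀ q ∨ dSet d a₀ l₀ q ⊆ dSet d a₀ l₀ p := by
  rcases le_total p.1 q.1 with hpq | hqp
  · exact .inl (dSet_subset_of_le hl₀ hpq h)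
  · exact .inr (dSet_subset_of_le hl₀ hqp (disjoint_comm.not.1 h))

lemma eq_of_fst_eq_of_not_disjoint (hl₀ : 0 < l₀) {p q : ℤ × (Fin d → ℤ)} (hpq : p.1 = q.1)
    (h : ¬Disjoint (dSet d a₀ l₀ p) (dSet d a₀ l₀ q)) : p = q := by
  obtain ⟨x, hxp, hxq⟩ := Set.not_disjoint_iff.1 h
  rw [mem_dSet_iff hl₀] at hxp hxq
  exact Prod.ext hpq (funext fun i => by rw [← hxp i, ← hxq i, hpq])

lemma dSet_nonempty (hl₀ : 0 < l₀) (p : ℤ × (Fin d → ℤ)) : (dSet d a₀ l₀ p).Nonempty :=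
  ⟨toRd d fun i => a₀ i + dSide l₀ p.1 * p.2 i, fun i =>
    ⟨le_rfl, by simp only [toRd, mul_add, mul_one]; linarith [dSide_pos hl₀ p.1]⟩⟩

lemma volume_dSet (p : ℤ × (Fin d → ℤ)) :
    volume (dSet d a₀ l₀ p) = ENNReal.ofReal (dSide l₀ p.1) ^ d := by
  have hset : dSet d a₀ l₀ p = (MeasurableEquiv.toLp 2 (Fin d → ℝ)).symm ⁻¹'
      Set.univ.pi (fun i => Set.Ico (a₀ i + dSide l₀ p.1 * p.2 i)
        (a₀ i + dSide l₀ p.1 * (p.2 i + 1))) := by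
    ext y
    simp [dSet, Set.mem_pi, MeasurableEquiv.toLp]
    rfl
  rw [hset, (EuclideanSpace.volume_preserving_symm_measurableEquiv_toLp (Fin d)).measure_preimage
    (MeasurableSet.univ_pi fun _ => measurableSet_Ico).nullMeasurableSet, volume_pi_pi]
  simp [Real.volume_Ico, mul_add]

lemma fst_le_of_dSet_subset (hd : d ≠ 0) (hl₀ : 0 < l₀) {p q : ℤ × (Fin d → ℤ)}
    (h : dSet d a₀ l₀ p ⊆ dSet d a₀ l₀ q) : p.1 ≤ q.1 := by
  have hvol := measure_mono (μ := volume) h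
  rw [volume_dSet, volume_dSet, ENNReal.pow_le_pow_left_iff hd,
    ENNReal.ofReal_le_ofReal_iff (dSide_pos hl₀ q.1).le] at hvol
  exact (dSide_le_dSide_iff hl₀).1 hvol

end DyadicCubes

section DyadicWeights

variable {d : ℕ} {a₀ : Fin d → ℝ} {l₀ β : ℝ}

def dWeight (β l₀ : ℝ) (p : ℤ × (Fin d → ℤ)) : ℝ≥0∞ := ENNReal.ofReal (dSide l₀ p.1 ^ β)

lemma dWeight_eq (hβ : 0 ≤ β) (hl₀ : 0 < l₀) (p : ℤ × (Fin d → ℤ)) :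
    dWeight β l₀ p = ENNReal.ofReal (dSide l₀ p.1) ^ β :=
  (ENNReal.ofReal_rpow_of_nonneg (dSide_pos hl₀ p.1).le hβ).symm

lemma dWeight_mono (hβ : 0 ≤ β) (hl₀ : 0 < l₀) {p q : ℤ × (Fin d → ℤ)} (h : p.1 ≤ q.1) :
    dWeight β l₀ p ≤ dWeight β l₀ q :=
  ENNReal.ofReal_le_ofReal <|
    Real.rpow_le_rpow (dSide_pos hl₀ p.1).le ((dSide_le_dSide_iff hl₀).2 h) hβ

lemma dWeight_le_tsum_of_subset_iUnion (hβ : 0 ≤ β) (hβd : β ≤ d) (hl₀ : 0 < l₀)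
    {ι : Type*} [Countable ι] {q : ℤ × (Fin d → ℤ)} (c : ι → ℤ × (Fin d → ℤ))
    (hcov : dSet d a₀ l₀ q ⊆ ⋃ i, dSet d a₀ l₀ (c i)) (hsmall : ∀ i, (c i).1 ≤ q.1) :
    dWeight β l₀ q ≤ ∑' i, dWeight β l₀ (c i) := by
  simp only [dWeight_eq hβ hl₀]
  refine ENNReal.rpow_le_tsum_rpow_of_rpow_le hβ hβd
    (ENNReal.ofReal_pos.2 (dSide_pos hl₀ q.1)).ne' ENNReal.ofReal_ne_top
    (fun i => ENNReal.ofReal_le_ofReal ((dSide_le_dSide_iff hl₀).2 (hsmall i))) ?_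
  simp only [ENNReal.rpow_natCast, ← volume_dSet (a₀ := a₀)]
  exact (measure_mono hcov).trans (measure_iUnion_le _)

lemma tendsto_dWeight_neg_atTop (hβ : 0 < β) (m : Fin d → ℤ) :
    Tendsto (fun n : ℕ => dWeight β l₀ (-(n : ℤ), m)) atTop (𝓝 0) := by
  have hside : Tendsto (fun n : ℕ => dSide l₀ (-(n : ℤ))) atTop (𝓝 0) := by
    simpa [dSide, zpow_neg, ← inv_pow] using
      (tendsto_pow_atTop_nhds_zero_of_lt_one (by norm_num : (0 : ℝ) ≤ 2⁻¹)
        (by norm_num)).const_mul l₀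
  simpa [dWeight, Real.zero_rpow hβ.ne'] using
    ENNReal.tendsto_ofReal (hside.rpow_const (.inr hβ.le))

lemma exists_tsum_dWeight_le (hβ : 0 < β) {ε : ℝ≥0∞} (hε : ε ≠ 0) :
    ∃ c : ℕ → ℤ × (Fin d → ℤ), ∑' n, dWeight β l₀ (c n) ≤ ε := by
  obtain ⟨δ, hδ, hδε⟩ := ENNReal.exists_pos_sum_of_countable hε ℕ
  have hsmall (n : ℕ) : ∃ p : ℤ × (Fin d → ℤ), dWeight β l₀ p ≤ δ n :=
    let ⟨k, hk⟩ := ((tendsto_dWeight_neg_atTop (l₀ := l₀) hβ 0).eventually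
      (Iic_mem_nhds (ENNReal.coe_pos.2 (hδ n)))).exists
    ⟨_, hk⟩
  choose c hc using hsmall
  exact ⟨c, (ENNReal.tsum_le_tsum hc).trans hδε.le⟩

lemma bddAbove_fst_of_dWeight_le (hβ : 0 < β) (hl₀ : 0 < l₀) {A : ℝ≥0∞} (hA : A ≠ ∞) :
    BddAbove (Prod.fst '' {p : ℤ × (Fin d → ℤ) | dWeight β l₀ p ≤ A}) := by
  have hside : Tendsto (fun n : ℕ => dSide l₀ n ^ β) atTop atTop :=
    (tendsto_rpow_atTop hβ).comp <| by
      simpa [dSide] using (tendsto_pow_atTop_atTop_of_one_lt one_lt_two).const_mul_atTop hl₀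
  obtain ⟨n, hn⟩ := (hside.eventually_gt_atTop A.toReal).exists
  refine ⟨n, ?_⟩
  rintro _ ⟨p, hp, rfl⟩
  by_contra! hnp
  have hle := dWeight_mono (d := d) hβ.le hl₀ (p := ((n : ℤ), 0)) (q := p) hnp.le
  exact absurd (hle.trans hp) (not_le.2 <| (ENNReal.lt_ofReal_iff_toReal_lt hA).2 hn)

lemma dContent_le_tsum (hβ : 0 < β) {E : Set (Rd d)} {ι : Type*} [Countable ι]
    (c : ι → ℤ × (Fin d → ℤ)) (hcov : E ⊆ ⋃ i, dSet d a₀ l₀ (c i)) :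
    dContent d β a₀ l₀ E ≤ ∑' i, dWeight β l₀ (c i) := by
  -- `dContent` only admits covers indexed by `ℕ`, and `ι` may be finite: append to `c` a
  -- sequence of cubes of total weight at most `ε`.
  refine ENNReal.le_of_forall_pos_le_add fun ε hε _ => ?_
  obtain ⟨pad, hpad⟩ := exists_tsum_dWeight_le (d := d) (l₀ := l₀) hβ (ENNReal.coe_pos.2 hε).ne'
  obtain ⟨e⟩ := nonempty_equiv_of_countable (α := ℕ) (β := ι ⊕ ℕ)
  let c' : ℕ → ℤ × (Fin d → ℤ) := Sum.elim c pad ∘ e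
  have hcov' : E ⊆ ⋃ n, dSet d a₀ l₀ (c' n) := fun x hx => by
    obtain ⟨i, hi⟩ := Set.mem_iUnion.1 (hcov hx)
    exact Set.mem_iUnion.2 ⟨e.symm (.inl i), by simpa [c'] using hi⟩
  calc dContent d β a₀ l₀ E ≤ ∑' n, dWeight β l₀ (c' n) := iInf₂_le c' hcov'
    _ = ∑' i, dWeight β l₀ (c i) + ∑' n, dWeight β l₀ (pad n) := by
      change ∑' n, dWeight β l₀ (Sum.elim c pad (e n)) = _
      rw [e.tsum_eq (fun x => dWeight β l₀ (Sum.elim c pad x)),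
        Summable.tsum_sum ENNReal.summable ENNReal.summable]
      rfl
    _ ≤ ∑' i, dWeight β l₀ (c i) + ε := by gcongr

end DyadicWeights

section MaximalCubes

variable {d : ℕ} {a₀ : Fin d → ℝ} {l₀ : ℝ}

def maxCubes (a₀ : Fin d → ℝ) (l₀ : ℝ) (W : Set (ℤ × (Fin d → ℤ))) :
    Set (ℤ × (Fin d → ℤ)) :=
  {m | m ∈ W ∧ ∀ w ∈ W, dSet d a₀ l₀ m ⊆ dSet d a₀ l₀ w → w = m}

lemma exists_mem_maxCubes_superset (hd : d ≠ 0) (hl₀ : 0 < l₀) {W : Set (ℤ × (Fin d → ℤ))}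
    (hW : BddAbove (Prod.fst '' W)) {w : ℤ × (Fin d → ℤ)} (hw : w ∈ W) :
    ∃ m ∈ maxCubes a₀ l₀ W, dSet d a₀ l₀ w ⊆ dSet d a₀ l₀ m := by
  obtain ⟨K, hK⟩ := hW
  obtain ⟨_, ⟨m, ⟨hmW, hwm⟩, rfl⟩, hmax⟩ := Int.exists_greatest_of_bdd
    (P := fun k => ∃ m, (m ∈ W ∧ dSet d a₀ l₀ w ⊆ dSet d a₀ l₀ m) ∧ m.1 = k)
    ⟨K, fun _ ⟨m, ⟨hm, _⟩, hk⟩ => hK ⟨m, hm, hk⟩⟩ ⟨w.1, w, ⟨hw, subset_rfl⟩, rfl⟩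
  refine ⟨m, ⟨hmW, fun w' hw' hmw' => ?_⟩, hwm⟩
  refine eq_of_fst_eq_of_not_disjoint (a₀ := a₀) hl₀
    (le_antisymm (hmax _ ⟨w', ⟨hw', hwm.trans hmw'⟩, rfl⟩) (fst_le_of_dSet_subset hd hl₀ hmw')) ?_
  obtain ⟨x, hx⟩ := dSet_nonempty (a₀ := a₀) hl₀ m
  exact Set.not_disjoint_iff.2 ⟨x, hmw' hx, hx⟩

lemma pairwiseDisjoint_maxCubes (hl₀ : 0 < l₀) (W : Set (ℤ × (Fin d → ℤ))) :
    (maxCubes a₀ l₀ W).PairwiseDisjoint (dSet d a₀ l₀) := by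
  intro m₁ hm₁ m₂ hm₂ hne
  by_contra h
  rcases dSet_subset_or_subset hl₀ h with h₁₂ | h₂₁
  · exact hne (hm₁.2 m₂ hm₂.1 h₁₂).symm
  · exact hne (hm₂.2 m₁ hm₁.1 h₂₁)

lemma pairwiseDisjoint_setOf_dSet_subset (hl₀ : 0 < l₀) {M : Set (ℤ × (Fin d → ℤ))}
    (hM : M.PairwiseDisjoint (dSet d a₀ l₀)) {ι : Type*} (c : ι → ℤ × (Fin d → ℤ)) :
    M.PairwiseDisjoint fun m => {i | dSet d a₀ l₀ (c i) ⊆ dSet d a₀ l₀ m} := by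
  intro m₁ hm₁ m₂ hm₂ hne
  refine Set.disjoint_left.2 fun i h₁ h₂ => ?_
  obtain ⟨x, hx⟩ := dSet_nonempty (a₀ := a₀) hl₀ (c i)
  exact Set.disjoint_left.1 (hM hm₁ hm₂ hne) (h₁ hx) (h₂ hx)

lemma eq_of_dSet_subset_of_pairwiseDisjoint (hl₀ : 0 < l₀) {T : Set (ℤ × (Fin d → ℤ))}
    (hT : T.PairwiseDisjoint (dSet d a₀ l₀)) {p q : ℤ × (Fin d → ℤ)} (hp : p ∈ T) (hq : q ∈ T)
    (hpq : dSet d a₀ l₀ p ⊆ dSet d a₀ l₀ q) : p = q := by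
  by_contra hne
  obtain ⟨x, hx⟩ := dSet_nonempty (a₀ := a₀) hl₀ p
  exact Set.disjoint_left.1 (hT hp hq hne) hx (hpq hx)

end MaximalCubes

section Packing

variable {d : ℕ} {β : ℝ} {a₀ : Fin d → ℝ} {l₀ : ℝ}

def dMass (β : ℝ) (a₀ : Fin d → ℝ) (l₀ : ℝ) (T : Set (ℤ × (Fin d → ℤ)))
    (Q : ℤ × (Fin d → ℤ)) : ℝ≥0∞ :=
  ∑' p : {p | p ∈ T ∧ dSet d a₀ l₀ p ⊆ dSet d a₀ l₀ Q}, dWeight β l₀ p.1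

def IsPacking (β : ℝ) (a₀ : Fin d → ℝ) (l₀ : ℝ) (T : Set (ℤ × (Fin d → ℤ))) : Prop :=
  ∀ Q, dMass β a₀ l₀ T Q ≤ 2 * dWeight β l₀ Q

lemma dMass_le_tsum (T : Set (ℤ × (Fin d → ℤ))) (Q : ℤ × (Fin d → ℤ)) :
    dMass β a₀ l₀ T Q ≤ ∑' p : T, dWeight β l₀ p.1 :=
  ENNReal.tsum_mono_subtype (dWeight β l₀) fun _ hp => hp.1

lemma dWeight_le_dMass_self {T : Set (ℤ × (Fin d → ℤ))} {p : ℤ × (Fin d → ℤ)} (hp : p ∈ T) :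
    dWeight β l₀ p ≤ dMass β a₀ l₀ T p :=
  ENNReal.le_tsum (f := fun q : {q | q ∈ T ∧ dSet d a₀ l₀ q ⊆ dSet d a₀ l₀ p} => dWeight β l₀ q.1)
    ⟨p, hp, subset_rfl⟩

lemma exists_maximal_isPacking (S : Set (ℤ × (Fin d → ℤ))) :
    ∃ T, Maximal (· ∈ {T | T ⊆ S ∧ IsPacking β a₀ l₀ T}) T := by
  refine zorn_subset _ fun c hcS hc => ⟨⋃₀ c, ⟨Set.sUnion_subset fun T hT => (hcS hT).1,
    fun Q => ?_⟩, fun _ => Set.subset_sUnion_of_mem⟩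
  have hunion : {p | p ∈ ⋃₀ c ∧ dSet d a₀ l₀ p ⊆ dSet d a₀ l₀ Q} =
      ⋃₀ ((fun T => {p | p ∈ T ∧ dSet d a₀ l₀ p ⊆ dSet d a₀ l₀ Q}) '' c) := by
    ext p
    simp only [Set.sUnion_image, Set.mem_iUnion, Set.mem_ofPred_eq, Set.mem_sUnion, exists_prop]
    tauto
  have hmono : Monotone fun T : Set (ℤ × (Fin d → ℤ)) =>
      {p | p ∈ T ∧ dSet d a₀ l₀ p ⊆ dSet d a₀ l₀ Q} :=
    fun _ _ h _ hp => ⟨h hp.1, hp.2⟩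
  rw [dMass, hunion]
  refine ENNReal.tsum_sUnion_le_of_isChain _ (hmono.isChain_image hc) ?_
  rintro _ ⟨T, hT, rfl⟩
  exact (hcS hT).2 Q

lemma exists_dWeight_le_dMass_of_notMem (hd : d ≠ 0) (hβ : 0 ≤ β) (hl₀ : 0 < l₀)
    {S T : Set (ℤ × (Fin d → ℤ))} (hT : Maximal (· ∈ {T | T ⊆ S ∧ IsPacking β a₀ l₀ T}) T)
    {p : ℤ × (Fin d → ℤ)} (hpS : p ∈ S) (hpT : p ∉ T) :
    ∃ Q, dSet d a₀ l₀ p ⊆ dSet d a₀ l₀ Q ∧ dWeight β l₀ Q ≤ dMass β a₀ l₀ T Q := by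
  have hins : ¬IsPacking β a₀ l₀ (insert p T) := fun h =>
    hpT (hT.2 ⟨Set.insert_subset hpS hT.1.1, h⟩ (Set.subset_insert p T) (Set.mem_insert p T))
  obtain ⟨Q, hQ⟩ := not_forall.1 hins
  rw [not_le] at hQ
  have hmass : dMass β a₀ l₀ (insert p T) Q ≤ dWeight β l₀ p + dMass β a₀ l₀ T Q := by
    refine (ENNReal.tsum_mono_subtype (dWeight β l₀) fun q hq => ?_).trans
      ((ENNReal.tsum_union_le _ {p} {q | q ∈ T ∧ dSet d a₀ l₀ q ⊆ dSet d a₀ l₀ Q}).trans_eq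
        (by rw [tsum_singleton]; rfl))
    rcases hq with ⟨rfl | hqT, hqQ⟩
    exacts [.inl rfl, .inr ⟨hqT, hqQ⟩]
  by_cases hpQ : dSet d a₀ l₀ p ⊆ dSet d a₀ l₀ Q
  · refine ⟨Q, hpQ, ?_⟩
    have hpQw := dWeight_mono hβ hl₀ (fst_le_of_dSet_subset hd hl₀ hpQ)
    rw [two_mul] at hQ
    exact ((ENNReal.add_lt_add_iff_left ENNReal.ofReal_ne_top).1
      (hQ.trans_le (hmass.trans (add_le_add hpQw le_rfl)))).le
  · refine absurd (hT.1.2 Q) (not_le.2 (hQ.trans_le ?_))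
    refine ENNReal.tsum_mono_subtype (dWeight β l₀) fun q hq => ?_
    rcases hq with ⟨rfl | hqT, hqQ⟩
    exacts [absurd hqQ hpQ, ⟨hqT, hqQ⟩]

lemma dContent_le_tsum_of_maximal (hd : d ≠ 0) (hβ : 0 < β) (hl₀ : 0 < l₀)
    {S T : Set (ℤ × (Fin d → ℤ))} (hT : Maximal (· ∈ {T | T ⊆ S ∧ IsPacking β a₀ l₀ T}) T) :
    dContent d β a₀ l₀ (⋃ p ∈ S, dSet d a₀ l₀ p) ≤ ∑' p : T, dWeight β l₀ p.1 := by
  rcases eq_or_ne (∑' p : T, dWeight β l₀ p.1) ∞ with htop | htop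
  · exact htop ▸ le_top
  set W := {Q | dWeight β l₀ Q ≤ dMass β a₀ l₀ T Q}
  have hWbdd : BddAbove (Prod.fst '' W) :=
    (bddAbove_fst_of_dWeight_le hβ hl₀ htop).mono <|
      Set.image_mono fun Q hQ => hQ.trans (dMass_le_tsum T Q)
  have hcov : ⋃ p ∈ S, dSet d a₀ l₀ p ⊆ ⋃ m : maxCubes a₀ l₀ W, dSet d a₀ l₀ m.1 := by
    refine Set.iUnion₂_subset fun p hpS => ?_
    obtain ⟨Q, hpQ, hQW⟩ : ∃ Q ∈ W, dSet d a₀ l₀ p ⊆ dSet d a₀ l₀ Q := by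
      by_cases hpT : p ∈ T
      · exact ⟨p, dWeight_le_dMass_self hpT, subset_rfl⟩
      · obtain ⟨Q, hpQ, hQ⟩ := exists_dWeight_le_dMass_of_notMem hd hβ.le hl₀ hT hpS hpT
        exact ⟨Q, hQ, hpQ⟩
    obtain ⟨m, hm, hQm⟩ := exists_mem_maxCubes_superset hd hl₀ hWbdd hpQ
    exact (hQW.trans hQm).trans (Set.subset_iUnion_of_subset ⟨m, hm⟩ subset_rfl)
  have hdisj :=
    pairwiseDisjoint_setOf_dSet_subset hl₀ (pairwiseDisjoint_maxCubes (a₀ := a₀) hl₀ W) id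
  calc dContent d β a₀ l₀ (⋃ p ∈ S, dSet d a₀ l₀ p)
      ≤ ∑' m : maxCubes a₀ l₀ W, dWeight β l₀ m.1 := dContent_le_tsum hβ _ hcov
    _ ≤ ∑' m : maxCubes a₀ l₀ W, dMass β a₀ l₀ T m := ENNReal.tsum_le_tsum fun m => m.2.1
    _ = ∑' q : ⋃ m ∈ maxCubes a₀ l₀ W, {q | q ∈ T ∧ dSet d a₀ l₀ q ⊆ dSet d a₀ l₀ m},
          dWeight β l₀ q.1 :=
      (ENNReal.tsum_biUnion' (f := dWeight β l₀)
        (t := fun m => {q | q ∈ T ∧ dSet d a₀ l₀ q ⊆ dSet d a₀ l₀ m})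
        (hdisj.mono fun _ _ hq => hq.2)).symm
    _ ≤ ∑' p : T, dWeight β l₀ p.1 :=
      ENNReal.tsum_mono_subtype _ (Set.iUnion₂_subset fun _ _ _ hq => hq.1)

lemma dWeight_le_tsum_of_forall_not_subset (hd : d ≠ 0) (hβ : 0 ≤ β) (hβd : β ≤ d)
    (hl₀ : 0 < l₀) {ι : Type*} [Countable ι] (c : ι → ℤ × (Fin d → ℤ)) {q : ℤ × (Fin d → ℤ)}
    (hcov : dSet d a₀ l₀ q ⊆ ⋃ i, dSet d a₀ l₀ (c i))
    (hq : ∀ i, ¬dSet d a₀ l₀ q ⊆ dSet d a₀ l₀ (c i)) :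
    dWeight β l₀ q ≤ ∑' i : {i | dSet d a₀ l₀ (c i) ⊆ dSet d a₀ l₀ q}, dWeight β l₀ (c i) := by
  refine dWeight_le_tsum_of_subset_iUnion (a₀ := a₀) hβ hβd hl₀
    (fun i : {i | dSet d a₀ l₀ (c i) ⊆ dSet d a₀ l₀ q} => c i) (fun x hx => ?_)
    fun i => fst_le_of_dSet_subset hd hl₀ i.2
  obtain ⟨i, hxi⟩ := Set.mem_iUnion.1 (hcov hx)
  rcases dSet_subset_or_subset hl₀ (Set.not_disjoint_iff.2 ⟨x, hxi, hx⟩) with hiq | hqi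
  · exact Set.mem_iUnion.2 ⟨⟨i, hiq⟩, hxi⟩
  · exact absurd hqi (hq i)

lemma tsum_dWeight_le_two_mul_of_cover (hd : d ≠ 0) (hβ : 0 ≤ β) (hβd : β ≤ d) (hl₀ : 0 < l₀)
    {T : Set (ℤ × (Fin d → ℤ))} (hT : T.PairwiseDisjoint (dSet d a₀ l₀))
    (hpack : IsPacking β a₀ l₀ T) {ι : Type*} [Countable ι] (c : ι → ℤ × (Fin d → ℤ))
    (hcov : ∀ p ∈ T, dSet d a₀ l₀ p ⊆ ⋃ i, dSet d a₀ l₀ (c i)) :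
    ∑' p : T, dWeight β l₀ p.1 ≤ 2 * ∑' i, dWeight β l₀ (c i) := by
  set Tsmall := {q | q ∈ T ∧ ∃ i, dSet d a₀ l₀ q ⊆ dSet d a₀ l₀ (c i)}
  set Ibig := ⋃ q ∈ T \ Tsmall, {i | dSet d a₀ l₀ (c i) ⊆ dSet d a₀ l₀ q}
  have hsmall : ∑' q : Tsmall, dWeight β l₀ q.1 ≤ ∑' i : ↥Ibigᶜ, 2 * dWeight β l₀ (c i) := by
    have hsub : Tsmall ⊆ ⋃ i ∈ Ibigᶜ, {q | q ∈ T ∧ dSet d a₀ l₀ q ⊆ dSet d a₀ l₀ (c i)} := by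
      rintro q ⟨hqT, i, hqi⟩
      refine Set.mem_biUnion (fun hi => ?_) ⟨hqT, hqi⟩
      obtain ⟨q', ⟨hq'T, hq'⟩, hiq'⟩ := Set.mem_iUnion₂.1 hi
      rw [← eq_of_dSet_subset_of_pairwiseDisjoint hl₀ hT hqT hq'T (hqi.trans hiq')] at hq'
      exact hq' ⟨hqT, i, hqi⟩
    calc ∑' q : Tsmall, dWeight β l₀ q.1
        ≤ ∑' i : ↥Ibigᶜ, dMass β a₀ l₀ T (c i) :=
          (ENNReal.tsum_mono_subtype _ hsub).trans (ENNReal.tsum_biUnion_le_tsum _ _ _)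
      _ ≤ ∑' i : ↥Ibigᶜ, 2 * dWeight β l₀ (c i) := ENNReal.tsum_le_tsum fun i => hpack _
  have hbig : ∑' q : ↥(T \ Tsmall), dWeight β l₀ q.1 ≤ ∑' i : Ibig, dWeight β l₀ (c i) :=
    calc ∑' q : ↥(T \ Tsmall), dWeight β l₀ q.1
        ≤ ∑' (q : ↥(T \ Tsmall)) (i : {i | dSet d a₀ l₀ (c i) ⊆ dSet d a₀ l₀ q.1}),
            dWeight β l₀ (c i) :=
          ENNReal.tsum_le_tsum fun q => dWeight_le_tsum_of_forall_not_subset hd hβ hβd hl₀ c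
            (hcov _ q.2.1) fun i hqi => q.2.2 ⟨q.2.1, i, hqi⟩
      _ = ∑' i : Ibig, dWeight β l₀ (c i) :=
          (ENNReal.tsum_biUnion' (f := fun i => dWeight β l₀ (c i))
            (pairwiseDisjoint_setOf_dSet_subset hl₀ (hT.subset Set.sdiff_subset) c)).symm
  calc ∑' p : T, dWeight β l₀ p.1
      ≤ ∑' q : Tsmall, dWeight β l₀ q.1 + ∑' q : ↥(T \ Tsmall), dWeight β l₀ q.1 :=
        (ENNReal.tsum_mono_subtype _ fun q hq => by by_cases q ∈ Tsmall <;> simp [*]).trans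
          (ENNReal.tsum_union_le _ _ _)
    _ ≤ ∑' i : ↥Ibigᶜ, 2 * dWeight β l₀ (c i) + ∑' i : Ibig, 2 * dWeight β l₀ (c i) :=
        add_le_add hsmall
          (hbig.trans (ENNReal.tsum_le_tsum fun i => le_mul_of_one_le_left' one_le_two))
    _ = 2 * ∑' i, dWeight β l₀ (c i) := by
        rw [add_comm, Summable.tsum_add_tsum_compl (f := fun i => 2 * dWeight β l₀ (c i))
          ENNReal.summable ENNReal.summable, ENNReal.tsum_mul_left]

lemma tsum_dWeight_le_two_mul_dContent (hd : d ≠ 0) (hβ : 0 ≤ β) (hβd : β ≤ d) (hl₀ : 0 < l₀)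
    {T : Set (ℤ × (Fin d → ℤ))} (hT : T.PairwiseDisjoint (dSet d a₀ l₀))
    (hpack : IsPacking β a₀ l₀ T) {E : Set (Rd d)} (hTE : ∀ p ∈ T, dSet d a₀ l₀ p ⊆ E) :
    ∑' p : T, dWeight β l₀ p.1 ≤ 2 * dContent d β a₀ l₀ E := by
  simp only [dContent, ENNReal.mul_iInf_of_ne two_ne_zero ENNReal.ofNat_ne_top]
  exact le_iInf₂ fun c hc => tsum_dWeight_le_two_mul_of_cover hd hβ hβd hl₀ hT hpack c
    fun p hp => (hTE p hp).trans hc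

end Packing

/-- Packing lemma for non-overlapping dyadic cubes. -/
theorem packing_lemma (d : ℕ) (β : ℝ) (hβ : 0 < β) (hβd : β ≤ d)
    (a₀ : Fin d → ℝ) (l₀ : ℝ) (hl₀ : 0 < l₀)
    (S : Set (ℤ × (Fin d → ℤ)))
    (hS : ∀ p ∈ S, ∀ q ∈ S, p ≠ q → Disjoint (dSet d a₀ l₀ p) (dSet d a₀ l₀ q)) :
    ∃ T ⊆ S,
      (∀ Q : ℤ × (Fin d → ℤ),
          ∑' p : {p // p ∈ T ∧ dSet d a₀ l₀ p ⊆ dSet d a₀ l₀ Q},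
              ENNReal.ofReal (dSide l₀ p.1.1 ^ β) ≤
            ENNReal.ofReal (2 * dSide l₀ Q.1 ^ β)) ∧
      dContent d β a₀ l₀ (⋃ p ∈ S, dSet d a₀ l₀ p) ≤
          ∑' p : T, ENNReal.ofReal (dSide l₀ p.1.1 ^ β) ∧
      ∑' p : T, ENNReal.ofReal (dSide l₀ p.1.1 ^ β) ≤
          2 * dContent d β a₀ l₀ (⋃ p ∈ S, dSet d a₀ l₀ p) := by
  have hd : d ≠ 0 := by
    rintro rfl
    exact hβ.not_ge (by simpa using hβd)
  obtain ⟨T, hT⟩ := exists_maximal_isPacking (β := β) (a₀ := a₀) (l₀ := l₀) S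
  obtain ⟨hTS, hpack⟩ := hT.prop
  refine ⟨T, hTS, fun Q => ?_, dContent_le_tsum_of_maximal hd hβ hl₀ hT,
    tsum_dWeight_le_two_mul_dContent hd hβ.le hβd hl₀ (Set.PairwiseDisjoint.subset hS hTS) hpack
      fun p hp => Set.subset_biUnion_of_mem (hTS hp)⟩
  rw [ENNReal.ofReal_mul zero_le_two, ENNReal.ofReal_ofNat]
  exact hpack Q
end
end

section
/- Dimension-change inequality for Choquet integrals: for f ≥ 0 and 0 < α ≤ β ≤ d, ∫_{ℝ^d} f dH^β_∞ ≤ (β/α) (∫_{ℝ^d} f^{α/β} dH^α_∞)^{β/α}. -/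
/-!
Comparing covers ball by ball gives `H^β_∞(E) ≤ H^α_∞(E)^{β/α}`: the map `s ↦ s^{α/β}` is
subadditive, and `ω_β^{α/β} ≤ ω_α` by the log-convexity of `Γ`. Since `f > t` iff
`f^{α/β} > t^{α/β}`, with the nonincreasing `φ(s) = H^α_∞({f^{α/β} > s})` and `p = β/α ≥ 1` it
remains to show `∫₀^∞ φ(t^{1/p})^p dt ≤ p (∫₀^∞ φ)^p`. After substituting `t = s^p`, this follows
from the Chebyshev bound `s φ(s) ≤ ∫₀^∞ φ`, which gives `p s^{p-1} φ(s)^p ≤ p (∫₀^∞ φ)^{p-1} φ(s)`.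
-/

open MeasureTheory Set
open scoped ENNReal NNReal

noncomputable section

theorem ENNReal.rpow_sum_le_sum_rpow {ι : Type*} (s : Finset ι) (a : ι → ℝ≥0∞) {q : ℝ}
    (hq0 : 0 < q) (hq1 : q ≤ 1) : (∑ i ∈ s, a i) ^ q ≤ ∑ i ∈ s, a i ^ q := by
  classical
  induction s using Finset.induction with
  | empty => simp [ENNReal.zero_rpow_of_pos hq0]
  | insert j s hj ih =>
    rw [Finset.sum_insert hj, Finset.sum_insert hj]
    exact (ENNReal.rpow_add_le_add_rpow _ _ hq0.le hq1).trans (add_le_add_right ih _)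

theorem ENNReal.rpow_tsum_le_tsum_rpow {ι : Type*} (a : ι → ℝ≥0∞) {q : ℝ}
    (hq0 : 0 < q) (hq1 : q ≤ 1) : (∑' i, a i) ^ q ≤ ∑' i, a i ^ q := by
  have hsup : (⨆ s : Finset ι, ∑ i ∈ s, a i) ^ q = ⨆ s : Finset ι, (∑ i ∈ s, a i) ^ q :=
    (ENNReal.orderIsoRpow q hq0).map_iSup _
  rw [ENNReal.tsum_eq_iSup_sum, hsup]
  exact iSup_le fun s =>
    (ENNReal.rpow_sum_le_sum_rpow s a hq0 hq1).trans (ENNReal.sum_le_tsum s)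

/-- Equivalently, `x ↦ log Γ(x + 1) / x` is monotone on `(0, ∞)`. -/
theorem Real.Gamma_add_one_le_rpow_of_le {x y : ℝ} (hx : 0 < x) (hxy : x ≤ y) :
    Real.Gamma (x + 1) ≤ Real.Gamma (y + 1) ^ (x / y) := by
  have hy : 0 < y := hx.trans_le hxy
  have hslope := Real.convexOn_log_Gamma.secant_mono (a := 1) (x := x + 1) (y := y + 1)
    (by norm_num) (by simp; linarith) (by simp; linarith) (by linarith) (by linarith)
    (by linarith)
  simp only [Function.comp_apply, Real.Gamma_one, Real.log_one, sub_zero, add_sub_cancel_right]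
    at hslope
  rw [Real.rpow_def_of_pos (Real.Gamma_pos_of_pos (by linarith)),
    ← Real.log_le_iff_le_exp (Real.Gamma_pos_of_pos (by linarith))]
  calc Real.log (Real.Gamma (x + 1)) = x * (Real.log (Real.Gamma (x + 1)) / x) := by field_simp
    _ ≤ x * (Real.log (Real.Gamma (y + 1)) / y) := mul_le_mul_of_nonneg_left hslope hx.le
    _ = Real.log (Real.Gamma (y + 1)) * (x / y) := by ring

theorem omegaConst_pos {β : ℝ} (hβ : 0 ≤ β) : 0 < omegaConst β :=
  div_pos (Real.rpow_pos_of_pos Real.pi_pos _) (Real.Gamma_pos_of_pos (by linarith))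

theorem omegaConst_rpow_le {α β : ℝ} (hα : 0 < α) (hαβ : α ≤ β) :
    omegaConst β ^ (α / β) ≤ omegaConst α := by
  have hβ : 0 < β := hα.trans_le hαβ
  have hΓ : Real.Gamma (α / 2 + 1) ≤ Real.Gamma (β / 2 + 1) ^ (α / β) := by
    simpa [show α / 2 / (β / 2) = α / β by field_simp] using
      Real.Gamma_add_one_le_rpow_of_le (x := α / 2) (y := β / 2) (by linarith) (by linarith)
  unfold omegaConst
  rw [Real.div_rpow (by positivity) (Real.Gamma_pos_of_pos (by linarith)).le,
    ← Real.rpow_mul Real.pi_pos.le, show β / 2 * (α / β) = α / 2 by field_simp]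
  gcongr

theorem ofReal_omegaConst_mul_rpow_rpow_le {α β r : ℝ} (hα : 0 < α) (hαβ : α ≤ β)
    (hr : 0 ≤ r) :
    ENNReal.ofReal (omegaConst β * r ^ β) ^ (α / β) ≤ ENNReal.ofReal (omegaConst α * r ^ α) := by
  have hβ : 0 < β := hα.trans_le hαβ
  have hω := omegaConst_pos hβ.le
  rw [ENNReal.ofReal_rpow_of_nonneg (by positivity) (by positivity),
    Real.mul_rpow hω.le (by positivity), ← Real.rpow_mul hr, show β * (α / β) = α by field_simp]
  gcongr
  exact omegaConst_rpow_le hα hαβ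

theorem hContent_mono (d : ℕ) (β : ℝ) {E E' : Set (Rd d)} (h : E ⊆ E') :
    hContent d β E ≤ hContent d β E' :=
  le_iInf₂ fun c hc => iInf₂_le c (h.trans hc)

theorem hContent_le_rpow (d : ℕ) {α β : ℝ} (hα : 0 < α) (hαβ : α ≤ β) (E : Set (Rd d)) :
    hContent d β E ≤ hContent d α E ^ (β / α) := by
  have hβ : 0 < β := hα.trans_le hαβ
  suffices h : hContent d β E ^ (α / β) ≤ hContent d α E by
    calc hContent d β E = (hContent d β E ^ (α / β)) ^ (β / α) := by
          rw [← ENNReal.rpow_mul, show α / β * (β / α) = 1 by field_simp, ENNReal.rpow_one]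
      _ ≤ hContent d α E ^ (β / α) := by gcongr
  refine le_iInf₂ fun c hc => ?_
  -- A ball of negative radius is empty, but `r ^ β` is junk for `r < 0`: clamp the radii at `0`.
  let c' : ℕ → Rd d × ℝ := fun i => ((c i).1, max (c i).2 0)
  have hc' : E ⊆ ⋃ i, Metric.ball (c' i).1 (c' i).2 :=
    hc.trans (iUnion_mono fun i => Metric.ball_subset_ball (le_max_left _ _))
  have hterm : ∀ i, ENNReal.ofReal (omegaConst β * (c' i).2 ^ β) ^ (α / β) ≤
      ENNReal.ofReal (omegaConst α * (c i).2 ^ α) := by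
    intro i
    rcases le_or_gt (c i).2 0 with hr | hr
    · simp [c', max_eq_right hr, Real.zero_rpow hβ.ne', ENNReal.zero_rpow_of_pos (div_pos hα hβ)]
    · simpa [c', max_eq_left hr.le] using ofReal_omegaConst_mul_rpow_rpow_le hα hαβ hr.le
  calc hContent d β E ^ (α / β)
      ≤ (∑' i, ENNReal.ofReal (omegaConst β * (c' i).2 ^ β)) ^ (α / β) := by
        gcongr
        exact iInf₂_le c' hc'
    _ ≤ ∑' i, ENNReal.ofReal (omegaConst β * (c' i).2 ^ β) ^ (α / β) :=
        ENNReal.rpow_tsum_le_tsum_rpow _ (div_pos hα hβ) ((div_le_one hβ).2 hαβ)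
    _ ≤ ∑' i, ENNReal.ofReal (omegaConst α * (c i).2 ^ α) := ENNReal.tsum_le_tsum hterm

theorem ENNReal.rpow_eq_rpow_sub_one_mul (x : ℝ≥0∞) {p : ℝ} (hp : 1 ≤ p) :
    x ^ p = x ^ (p - 1) * x := by
  conv_lhs => rw [show p = (p - 1) + 1 by ring]
  rw [ENNReal.rpow_add_of_nonneg _ _ (by linarith) zero_le_one, ENNReal.rpow_one]

theorem lintegral_comp_rpow_Ioi (g : ℝ → ℝ≥0∞) {p : ℝ} (hp : 0 < p) :
    ∫⁻ y in Ioi 0, g y = ∫⁻ x in Ioi 0, ENNReal.ofReal (p * x ^ (p - 1)) * g (x ^ p) := by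
  have himage : (· ^ p) '' Ioi 0 = Ioi (0 : ℝ) := by
    ext y
    refine ⟨fun ⟨x, hx, hxy⟩ => hxy ▸ Real.rpow_pos_of_pos hx p, fun hy => ?_⟩
    exact ⟨y ^ p⁻¹, Real.rpow_pos_of_pos hy _, Real.rpow_inv_rpow (le_of_lt hy) hp.ne'⟩
  have := lintegral_image_eq_lintegral_abs_deriv_mul measurableSet_Ioi
    (fun x hx => (Real.hasDerivAt_rpow_const (Or.inl (ne_of_gt hx))).hasDerivWithinAt)
    ((Real.rpow_left_injOn hp.ne').mono Ioi_subset_Ici_self) g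
  rw [himage] at this
  rw [this]
  refine setLIntegral_congr_fun measurableSet_Ioi fun x hx => ?_
  rw [abs_of_pos (mul_pos hp (Real.rpow_pos_of_pos hx _))]

theorem Antitone.ofReal_mul_le_lintegral_Ioi {φ : ℝ → ℝ≥0∞} (hφ : Antitone φ) (s : ℝ) :
    ENNReal.ofReal s * φ s ≤ ∫⁻ t in Ioi 0, φ t :=
  calc ENNReal.ofReal s * φ s = ∫⁻ _ in Ioc 0 s, φ s := by
        rw [setLIntegral_const, Real.volume_Ioc, sub_zero, mul_comm]
    _ ≤ ∫⁻ t in Ioc 0 s, φ t := setLIntegral_mono' measurableSet_Ioc fun t ht => hφ ht.2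
    _ ≤ ∫⁻ t in Ioi 0, φ t := lintegral_mono_set Ioc_subset_Ioi_self

theorem Antitone.lintegral_Ioi_rpow_le {φ : ℝ → ℝ≥0∞} (hφ : Antitone φ) {p : ℝ} (hp : 1 ≤ p) :
    ∫⁻ t in Ioi 0, φ (t ^ p⁻¹) ^ p ≤ ENNReal.ofReal p * (∫⁻ s in Ioi 0, φ s) ^ p := by
  have hp0 : 0 < p := one_pos.trans_le hp
  set I := ∫⁻ s in Ioi 0, φ s
  have hsplit : ∀ x ∈ Ioi (0 : ℝ), ENNReal.ofReal (p * x ^ (p - 1)) * φ ((x ^ p) ^ p⁻¹) ^ p =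
      ENNReal.ofReal p * ((ENNReal.ofReal x * φ x) ^ (p - 1) * φ x) := by
    intro x hx
    rw [Real.rpow_rpow_inv (le_of_lt hx) hp0.ne', ENNReal.ofReal_mul hp0.le,
      ← ENNReal.ofReal_rpow_of_pos hx, ENNReal.mul_rpow_of_nonneg _ _ (by linarith),
      ENNReal.rpow_eq_rpow_sub_one_mul _ hp]
    ring
  calc ∫⁻ t in Ioi 0, φ (t ^ p⁻¹) ^ p
      = ∫⁻ x in Ioi 0, ENNReal.ofReal p * ((ENNReal.ofReal x * φ x) ^ (p - 1) * φ x) := by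
        rw [lintegral_comp_rpow_Ioi _ hp0]
        exact setLIntegral_congr_fun measurableSet_Ioi hsplit
    _ ≤ ∫⁻ x in Ioi 0, (ENNReal.ofReal p * I ^ (p - 1)) * φ x := by
        refine lintegral_mono fun x => ?_
        rw [mul_assoc]
        gcongr
        exact hφ.ofReal_mul_le_lintegral_Ioi x
    _ = ENNReal.ofReal p * I ^ p := by
        rw [lintegral_const_mul _ hφ.measurable, mul_assoc, ← ENNReal.rpow_eq_rpow_sub_one_mul _ hp]

theorem choquet_dimension_change_general (d : ℕ) (α β : ℝ) (hα : 0 < α) (hαβ : α ≤ β)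
    (f : Rd d → ℝ) (hf : ∀ x, 0 ≤ f x) :
    choquet d (hContent d β) Set.univ f ≤
      ENNReal.ofReal (β / α) *
        (choquet d (hContent d α) Set.univ (fun x => f x ^ (α / β))) ^ (β / α) := by
  have hq : 0 < α / β := div_pos hα (hα.trans_le hαβ)
  set φ : ℝ → ℝ≥0∞ := fun s => hContent d α {x | x ∈ Set.univ ∧ s < f x ^ (α / β)}
  have hφ : Antitone φ := fun s s' hss' =>
    hContent_mono d α fun x hx => ⟨hx.1, hss'.trans_lt hx.2⟩
  have hlevel : ∀ t ∈ Ioi (0 : ℝ), hContent d β {x | x ∈ Set.univ ∧ t < f x} ≤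
      φ (t ^ (β / α)⁻¹) ^ (β / α) := by
    intro t ht
    have hset : {x | x ∈ Set.univ ∧ t < f x} =
        {x | x ∈ Set.univ ∧ t ^ (α / β) < f x ^ (α / β)} := by
      ext x
      simp [Real.rpow_lt_rpow_iff (le_of_lt ht) (hf x) hq]
    rw [hset, inv_div]
    exact hContent_le_rpow d hα hαβ _
  calc choquet d (hContent d β) Set.univ f
      ≤ ∫⁻ t in Ioi 0, φ (t ^ (β / α)⁻¹) ^ (β / α) := setLIntegral_mono' measurableSet_Ioi hlevel
    _ ≤ _ := hφ.lintegral_Ioi_rpow_le ((one_le_div hα).2 hαβ)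

/-- Dimension-change inequality for Choquet integrals. -/
theorem choquet_dimension_change (d : ℕ) (α β : ℝ) (hα : 0 < α) (hαβ : α ≤ β)
    (hβd : β ≤ d) (f : Rd d → ℝ) (hf : ∀ x, 0 ≤ f x) :
    choquet d (hContent d β) Set.univ f ≤
      ENNReal.ofReal (β / α) *
        (choquet d (hContent d α) Set.univ (fun x => f x ^ (α / β))) ^ (β / α) :=
  choquet_dimension_change_general d α β hα hαβ f hf
end
end
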